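/- arXiv:2306.03061 — 3 statements merged into one kernel-verified Lean document; each statement's English description precedes it below -/
import Mathlib

section
/- Under the hypotheses of the previous statement (p_m summing to 1, Voronoi density p_V), the integral of p_V over all of ℝ^d with respect to Lebesgue measure equals 1; that is, p_V is a probability density on ℝ^d. -/
open MeasureTheory Classical

/-! On the fibre `K ∩ mstar ⁻¹' {m}` the density is `p m / μ_m(C_m)` times the Radon–Nikodym
derivative of `μ_m`, whose integral over the fibre is its `μ_m`-mass. The fibre differs from the
cell `C_m` only inside finitely many perpendicular bisectors, which are Lebesgue-null hyperplanes,
so by absolute continuity that mass is `μ_m(C_m)`. Each fibre thus contributes `p m`. -/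

namespace MeasureTheory.Measure

variable {α : Type*} [MeasurableSpace α] {μ ν : Measure α}

lemma haveLebesgueDecomposition_of_absolutelyContinuous [SigmaFinite ν] (hμν : μ ≪ ν) :
    μ.HaveLebesgueDecomposition ν := by
  have := sFinite_of_absolutelyContinuous hμν
  rw [← sum_sfiniteSeq μ]
  infer_instance

lemma setIntegral_toReal_rnDeriv_of_ne_top [μ.HaveLebesgueDecomposition ν] (hμν : μ ≪ ν)
    {s : Set α} (hs : MeasurableSet s) (hμs : μ s ≠ ⊤) :
    ∫ x in s, (μ.rnDeriv ν x).toReal ∂ν = μ.real s := by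
  have hlint := setLIntegral_rnDeriv' hμν hs
  rw [integral_toReal (measurable_rnDeriv μ ν).aemeasurable
    (ae_lt_top (measurable_rnDeriv μ ν) (hlint ▸ hμs)), hlint, measureReal_def]

end MeasureTheory.Measure

lemma integral_indicator_eq_sum_setIntegral_fiber {α ι : Type*} [MeasurableSpace α] [Fintype ι]
    [MeasurableSpace ι] [MeasurableSingletonClass ι] {ν : Measure α} {K : Set α}
    (hK : MeasurableSet K) {g : α → ι} (hg : Measurable g) {F : ι → α → ℝ}
    (hF : ∀ i, IntegrableOn (F i) (K ∩ g ⁻¹' {i}) ν) :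
    ∫ x, K.indicator (fun x ↦ F (g x) x) x ∂ν = ∑ i, ∫ x in K ∩ g ⁻¹' {i}, F i x ∂ν := by
  have hfiber : ∀ i, MeasurableSet (K ∩ g ⁻¹' {i}) := fun i ↦ hK.inter (hg (.singleton i))
  have hsum : ∀ x, K.indicator (fun x ↦ F (g x) x) x = ∑ i, (K ∩ g ⁻¹' {i}).indicator (F i) x := by
    intro x
    rw [Finset.sum_eq_single (g x) (fun i _ hi ↦ Set.indicator_of_notMem (fun h ↦ hi h.2.symm) _)
      (by simp)]
    by_cases hx : x ∈ K <;> simp [hx]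
  simp_rw [hsum]
  rw [integral_finsetSum _ fun i _ ↦ (integrable_indicator_iff (hfiber i)).2 (hF i)]
  exact Finset.sum_congr rfl fun i _ ↦ integral_indicator (hfiber i)

section Voronoi

variable {E : Type*} [NormedAddCommGroup E] [InnerProductSpace ℝ E]

def voronoiCell {ι : Type*} (v : ι → E) (i : ι) : Set E :=
  {x | ∀ j, ‖x - v i‖ ^ 2 ≤ ‖x - v j‖ ^ 2}

variable [FiniteDimensional ℝ E] [MeasurableSpace E] [BorelSpace E] (μ : Measure E)
  [μ.IsAddHaarMeasure]

lemma addHaar_setOf_norm_sub_sq_eq {a b : E} (hab : a ≠ b) :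
    μ {x | ‖x - a‖ ^ 2 = ‖x - b‖ ^ 2} = 0 := by
  convert Measure.addHaar_affineSubspace μ (AffineSubspace.perpBisector a b)
    (by simpa using hab) using 2
  ext x
  simp [AffineSubspace.mem_perpBisector_iff_dist_eq, dist_eq_norm]

lemma addHaar_voronoiCell_diff_preimage_eq_zero {ι : Type*} [Finite ι] {v : ι → E}
    (hv : Function.Injective v) {nearest : E → ι}
    (hnearest : ∀ x j, ‖x - v (nearest x)‖ ^ 2 ≤ ‖x - v j‖ ^ 2) (i : ι) :
    μ (voronoiCell v i \ nearest ⁻¹' {i}) = 0 := by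
  have hsub : voronoiCell v i \ nearest ⁻¹' {i} ⊆
      ⋃ j, ⋃ (_ : j ≠ i), {x | ‖x - v i‖ ^ 2 = ‖x - v j‖ ^ 2} := by
    rintro x ⟨hcell, hx⟩
    exact Set.mem_biUnion (x := nearest x) hx
      (le_antisymm (hcell (nearest x)) (hnearest x i))
  refine measure_mono_null hsub (measure_iUnion_null fun j ↦ measure_iUnion_null fun hj ↦ ?_)
  exact addHaar_setOf_norm_sub_sq_eq μ (hv.ne (Ne.symm hj))

lemma measure_inter_preimage_nearest_eq {ν : Measure E} (hνμ : ν ≪ μ) {ι : Type*} [Finite ι]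
    {v : ι → E} (hv : Function.Injective v) {nearest : E → ι}
    (hnearest : ∀ x j, ‖x - v (nearest x)‖ ^ 2 ≤ ‖x - v j‖ ^ 2) (K : Set E) (i : ι) :
    ν (K ∩ nearest ⁻¹' {i}) = ν (K ∩ voronoiCell v i) := by
  have hsub : K ∩ nearest ⁻¹' {i} ⊆ K ∩ voronoiCell v i :=
    fun x ⟨hxK, hxi⟩ ↦ ⟨hxK, hxi ▸ hnearest x⟩
  have hnull : μ ((K ∩ voronoiCell v i) \ (K ∩ nearest ⁻¹' {i})) = 0 :=
    measure_mono_null (by rintro x ⟨⟨hxK, hx⟩, hxi⟩; exact ⟨hx, fun hi ↦ hxi ⟨hxK, hi⟩⟩)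
      (addHaar_voronoiCell_diff_preimage_eq_zero μ hv hnearest i)
  exact measure_eq_measure_of_null_sdiff hsub (hνμ hnull)

end Voronoi

theorem voronoi_density_integrates_to_one_general
    (d M : ℕ) (p : Fin M → ℝ) (hpsum : ∑ m, p m = 1)
    (K : Set (EuclideanSpace ℝ (Fin d))) (hK : IsCompact K)
    (v : Fin M → EuclideanSpace ℝ (Fin d)) (hv : Function.Injective v)
    (C : Fin M → Set (EuclideanSpace ℝ (Fin d)))
    (hC : ∀ m, C m = {x ∈ K | ∀ m', ‖x - v m‖ ^ 2 ≤ ‖x - v m'‖ ^ 2})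
    (μ : Fin M → Measure (EuclideanSpace ℝ (Fin d)))
    (hμac : ∀ m, μ m ≪ volume)
    (hμpos : ∀ m, 0 < μ m (C m)) (hμfin : ∀ m, μ m (C m) < ⊤)
    (mstar : EuclideanSpace ℝ (Fin d) → Fin M)
    (hmstar_meas : Measurable mstar)
    (hmstar : ∀ x m, ‖x - v (mstar x)‖ ^ 2 ≤ ‖x - v m‖ ^ 2)
    (pV : EuclideanSpace ℝ (Fin d) → ℝ)
    (hpV : ∀ x, pV x =
      if x ∈ K then
        (p (mstar x) / (μ (mstar x) (C (mstar x))).toReal) *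
          ((μ (mstar x)).rnDeriv volume x).toReal
      else 0) :
    ∫ x, pV x ∂volume = 1 := by
  have hKmeas : MeasurableSet K := hK.isClosed.measurableSet
  have hfiber : ∀ m, μ m (K ∩ mstar ⁻¹' {m}) = μ m (C m) := fun m ↦ by
    rw [hC m]
    exact measure_inter_preimage_nearest_eq volume (hμac m) hv hmstar K m
  have hpV' : pV = K.indicator fun x ↦ p (mstar x) / (μ (mstar x) (C (mstar x))).toReal *
      ((μ (mstar x)).rnDeriv volume x).toReal := by
    ext x
    rw [hpV, Set.indicator_apply]
  have hint : ∀ m, IntegrableOn (fun x ↦ p m / (μ m (C m)).toReal *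
      ((μ m).rnDeriv volume x).toReal) (K ∩ mstar ⁻¹' {m}) volume := fun m ↦
    (Measure.integrableOn_toReal_rnDeriv (hfiber m ▸ (hμfin m).ne)).const_mul _
  rw [hpV', integral_indicator_eq_sum_setIntegral_fiber hKmeas hmstar_meas hint, ← hpsum]
  refine Finset.sum_congr rfl fun m _ ↦ ?_
  have := (μ m).haveLebesgueDecomposition_of_absolutelyContinuous (hμac m)
  rw [integral_const_mul, Measure.setIntegral_toReal_rnDeriv_of_ne_top (hμac m)
    (hKmeas.inter (hmstar_meas (.singleton m))) (hfiber m ▸ (hμfin m).ne), measureReal_def,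
    hfiber m, div_mul_cancel₀]
  exact ENNReal.toReal_ne_zero.2 ⟨(hμpos m).ne', (hμfin m).ne⟩

/-- The Voronoi density is a probability density: it integrates to `1` over `ℝ^d`. -/
theorem voronoi_density_integrates_to_one
    (d M : ℕ) (p : Fin M → ℝ) (hp : ∀ m, 0 ≤ p m) (hpsum : ∑ m, p m = 1)
    (K : Set (EuclideanSpace ℝ (Fin d))) (hK : IsCompact K)
    (v : Fin M → EuclideanSpace ℝ (Fin d)) (hv : Function.Injective v)
    (hvK : ∀ m, v m ∈ K)
    (C : Fin M → Set (EuclideanSpace ℝ (Fin d)))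
    (hC : ∀ m, C m = {x ∈ K | ∀ m', ‖x - v m‖ ^ 2 ≤ ‖x - v m'‖ ^ 2})
    (μ : Fin M → Measure (EuclideanSpace ℝ (Fin d)))
    (hμac : ∀ m, μ m ≪ volume)
    (hμpos : ∀ m, 0 < μ m (C m)) (hμfin : ∀ m, μ m (C m) < ⊤)
    (mstar : EuclideanSpace ℝ (Fin d) → Fin M)
    (hmstar_meas : Measurable mstar)
    (hmstar : ∀ x m, ‖x - v (mstar x)‖ ^ 2 ≤ ‖x - v m‖ ^ 2)
    (pV : EuclideanSpace ℝ (Fin d) → ℝ)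
    (hpV : ∀ x, pV x =
      if x ∈ K then
        (p (mstar x) / (μ (mstar x) (C (mstar x))).toReal) *
          ((μ (mstar x)).rnDeriv volume x).toReal
      else 0) :
    ∫ x, pV x ∂volume = 1 :=
  voronoi_density_integrates_to_one_general d M p hpsum K hK v hv C hC μ hμac hμpos hμfin mstar
    hmstar_meas hmstar pV hpV
end

section
/- (Time reversibility of refraction.) Let r_⊥ ∈ ℝ^d be nonzero and ΔU ∈ ℝ with ‖r_⊥‖₂² > 2ΔU, and define the refracted normal momentum r'_⊥ = √(‖r_⊥‖₂² − 2ΔU) · (r_⊥ / ‖r_⊥‖₂). Then the reversed momentum −r'_⊥ satisfies the refraction condition for the reversed potential jump −ΔU, namely ‖−r'_⊥‖₂² > 2(−ΔU), and applying refraction with jump −ΔU to −r'_⊥ recovers the negated original momentum: √(‖r'_⊥‖₂² + 2ΔU) · ((−r'_⊥) / ‖r'_⊥‖₂) = −r_⊥. -/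
/-- Time reversibility of refraction: the reversed refracted momentum `−r'⊥`
satisfies the refraction condition for the reversed potential jump `−ΔU`, and
refracting it with jump `−ΔU` recovers the negated original momentum `−r⊥`. -/
theorem refraction_time_reversible
    (d : ℕ) (rp : EuclideanSpace ℝ (Fin d)) (hne : rp ≠ 0)
    (ΔU : ℝ) (hΔU : ‖rp‖ ^ 2 > 2 * ΔU)
    (rp' : EuclideanSpace ℝ (Fin d))
    (hrp' : rp' = Real.sqrt (‖rp‖ ^ 2 - 2 * ΔU) • (‖rp‖⁻¹ • rp)) :
    ‖-rp'‖ ^ 2 > 2 * (-ΔU) ∧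
    Real.sqrt (‖rp'‖ ^ 2 + 2 * ΔU) • (‖rp'‖⁻¹ • (-rp')) = -rp := by
  have hnorm : ‖rp‖ ≠ 0 := norm_ne_zero_iff.mpr hne
  have hnormpos : 0 < ‖rp‖ := norm_pos_iff.mpr hne
  have hpos : 0 < ‖rp‖ ^ 2 - 2 * ΔU := by linarith
  have hsq : Real.sqrt (‖rp‖ ^ 2 - 2 * ΔU) > 0 := Real.sqrt_pos.mpr hpos
  have hunit : ‖(‖rp‖⁻¹ • rp : EuclideanSpace ℝ (Fin d))‖ = 1 := by
    rw [norm_smul, norm_inv, norm_norm, inv_mul_cancel₀ hnorm]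
  have hnorm' : ‖rp'‖ = Real.sqrt (‖rp‖ ^ 2 - 2 * ΔU) := by
    rw [hrp', norm_smul, hunit, Real.norm_eq_abs, abs_of_pos hsq, mul_one]
  have hnorm'sq : ‖rp'‖ ^ 2 = ‖rp‖ ^ 2 - 2 * ΔU := by
    rw [hnorm', Real.sq_sqrt hpos.le]
  constructor
  · rw [norm_neg, hnorm'sq]
    have : 0 < ‖rp‖ ^ 2 := by positivity
    linarith
  · have h1 : ‖rp'‖ ^ 2 + 2 * ΔU = ‖rp‖ ^ 2 := by rw [hnorm'sq]; ring
    rw [h1, Real.sqrt_sq hnormpos.le, hnorm', hrp']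
    rw [smul_neg, smul_smul, smul_smul, inv_mul_cancel₀ (ne_of_gt hsq), one_mul,
      smul_neg, smul_smul, mul_inv_cancel₀ hnorm, one_smul]
end

section
/- (Measure preservation of the refraction step in reduced coordinates.) Fix ε > 0, fix the coordinates x₂, …, x_d and r₂, …, r_d of x, r ∈ ℝ^d, and let ΔU : ℝ^d → ℝ be differentiable. For (x₁, r₁) with x₁ < 0 and r₁ > 0, set y(x₁, r₁) = x − (x₁/r₁) r (the boundary-hitting point), W(x₁, r₁) = ΔU(y(x₁, r₁)), and, on the region where r₁² > 2W(x₁, r₁), define the refraction map γ(x₁, r₁) = (x'₁, r'₁) with r'₁ = √(r₁² − 2W(x₁, r₁)) and x'₁ = (ε + x₁/r₁) · r'₁. Then at every point of this region where γ is differentiable, the Jacobian determinant of γ equals 1; hence γ preserves Lebesgue measure locally on this region. -/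
/-!
The potential jump `W` is evaluated at the hitting point, whose normal coordinate vanishes, so it
depends on `(x₁, r₁)` only through `s = x₁ / r₁ = -δ`: `W = V s`. In the coordinates `(s, r₁)` the
refraction step factors as
`(x₁, r₁) ↦ (s, r₁) ↦ (s, r₁') ↦ ((ε + s) r₁', r₁')` with `r₁' = √(r₁² - 2 V s)`.
Each factor fixes one coordinate, so its Jacobian is a single partial derivative: `1 / r₁`,
`r₁ / r₁'` (as `V s` does not depend on `r₁`) and `r₁'`, whose product is `1`.
-/

theorem LinearMap.det_prod_eq_sub {R : Type*} [CommRing R] (L : R × R →ₗ[R] R × R) :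
    LinearMap.det L = (L (1, 0)).1 * (L (0, 1)).2 - (L (0, 1)).1 * (L (1, 0)).2 := by
  rw [← LinearMap.det_toMatrix (Module.Basis.finTwoProd R), Matrix.det_fin_two]
  simp [LinearMap.toMatrix_apply]

section Triangular

variable {𝕜 : Type*} [NontriviallyNormedField 𝕜] {f : 𝕜 × 𝕜 → 𝕜 × 𝕜} {p : 𝕜 × 𝕜} {c : 𝕜}

theorem det_fderiv_of_fst_eq (hf : ∀ q, (f q).1 = q.1) (hdiff : DifferentiableAt 𝕜 f p)
    (h : HasDerivAt (fun t => (f (p.1, t)).2) c p.2) :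
    (fderiv 𝕜 f p).det = c := by
  set L := fderiv 𝕜 f p
  have hL : HasFDerivAt f L p := hdiff.hasFDerivAt
  have hfst : ∀ v, (L v).1 = v.1 := fun v =>
    congrArg (· v) (hL.fst.unique (by simpa only [hf] using hasFDerivAt_fst))
  have hline : HasDerivAt (fun t => f (p.1, t)) (L (0, 1)) p.2 :=
    hL.comp_hasDerivAt_of_eq p.2 ((hasDerivAt_const _ _).prodMk (hasDerivAt_id _)) rfl
  have h01 : (L (0, 1)).2 = c := (hasFDerivAt_snd.comp_hasDerivAt _ hline).unique h
  simp [LinearMap.det_prod_eq_sub, hfst, h01]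

theorem det_fderiv_of_snd_eq (hf : ∀ q, (f q).2 = q.2) (hdiff : DifferentiableAt 𝕜 f p)
    (h : HasDerivAt (fun t => (f (t, p.2)).1) c p.1) :
    (fderiv 𝕜 f p).det = c := by
  set L := fderiv 𝕜 f p
  have hL : HasFDerivAt f L p := hdiff.hasFDerivAt
  have hsnd : ∀ v, (L v).2 = v.2 := fun v =>
    congrArg (· v) (hL.snd.unique (by simpa only [hf] using hasFDerivAt_snd))
  have hline : HasDerivAt (fun t => f (t, p.2)) (L (1, 0)) p.1 :=
    hL.comp_hasDerivAt_of_eq p.1 ((hasDerivAt_id _).prodMk (hasDerivAt_const _ _)) rfl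
  have h10 : (L (1, 0)).1 = c := (hasFDerivAt_fst.comp_hasDerivAt _ hline).unique h
  simp [LinearMap.det_prod_eq_sub, hsnd, h10]

def slopeChart (p : 𝕜 × 𝕜) : 𝕜 × 𝕜 := (p.1 / p.2, p.2)

def driftAfterHit (ε : 𝕜) (p : 𝕜 × 𝕜) : 𝕜 × 𝕜 := ((ε + p.1) * p.2, p.2)

theorem differentiableAt_slopeChart (hp : p.2 ≠ 0) : DifferentiableAt 𝕜 slopeChart p := by
  unfold slopeChart
  fun_prop (disch := exact hp)

theorem det_fderiv_slopeChart (hp : p.2 ≠ 0) : (fderiv 𝕜 slopeChart p).det = p.2⁻¹ :=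
  det_fderiv_of_snd_eq (fun _ => rfl) (differentiableAt_slopeChart hp)
    (by simpa [slopeChart] using (hasDerivAt_id p.1).div_const p.2)

theorem differentiable_driftAfterHit (ε : 𝕜) : Differentiable 𝕜 (driftAfterHit ε) := by
  unfold driftAfterHit
  fun_prop

theorem det_fderiv_driftAfterHit (ε : 𝕜) (p : 𝕜 × 𝕜) :
    (fderiv 𝕜 (driftAfterHit ε) p).det = p.2 :=
  det_fderiv_of_snd_eq (fun _ => rfl) (differentiable_driftAfterHit ε p)
    (by simpa [driftAfterHit] using ((hasDerivAt_id p.1).const_add ε).mul_const p.2)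

end Triangular

noncomputable def refractNormal (V : ℝ → ℝ) (p : ℝ × ℝ) : ℝ × ℝ :=
  (p.1, √(p.2 ^ 2 - 2 * V p.1))

noncomputable def reducedRefraction (ε : ℝ) (V : ℝ → ℝ) : ℝ × ℝ → ℝ × ℝ :=
  driftAfterHit ε ∘ refractNormal V ∘ slopeChart

section Refraction

variable {ε : ℝ} {V : ℝ → ℝ} {p : ℝ × ℝ}

theorem differentiableAt_refractNormal (hV : DifferentiableAt ℝ V p.1)
    (hp : 2 * V p.1 < p.2 ^ 2) : DifferentiableAt ℝ (refractNormal V) p := by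
  have hp' : p.2 ^ 2 - 2 * V p.1 ≠ 0 := by linarith
  unfold refractNormal
  fun_prop (disch := assumption)

theorem det_fderiv_refractNormal (hV : DifferentiableAt ℝ V p.1) (hp : 2 * V p.1 < p.2 ^ 2) :
    (fderiv ℝ (refractNormal V) p).det = p.2 / √(p.2 ^ 2 - 2 * V p.1) := by
  refine det_fderiv_of_fst_eq (fun _ => rfl) (differentiableAt_refractNormal hV hp) ?_
  refine (((hasDerivAt_pow 2 p.2).sub_const (2 * V p.1)).sqrt (by linarith)).congr_deriv ?_
  field_simp
  ring

theorem differentiableAt_reducedRefraction (hp : p.2 ≠ 0)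
    (hV : DifferentiableAt ℝ V (p.1 / p.2)) (hpos : 2 * V (p.1 / p.2) < p.2 ^ 2) :
    DifferentiableAt ℝ (reducedRefraction ε V) p :=
  (differentiable_driftAfterHit ε _).comp p
    ((differentiableAt_refractNormal (p := slopeChart p) hV hpos).comp p
      (differentiableAt_slopeChart hp))

theorem det_fderiv_reducedRefraction (hp : p.2 ≠ 0)
    (hV : DifferentiableAt ℝ V (p.1 / p.2)) (hpos : 2 * V (p.1 / p.2) < p.2 ^ 2) :
    (fderiv ℝ (reducedRefraction ε V) p).det = 1 := by
  have hslope := differentiableAt_slopeChart (𝕜 := ℝ) hp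
  have hrefract := differentiableAt_refractNormal (p := slopeChart p) hV hpos
  have hu : 0 < √(p.2 ^ 2 - 2 * V (p.1 / p.2)) := Real.sqrt_pos.2 (by linarith)
  rw [reducedRefraction, fderiv_comp _ (differentiable_driftAfterHit ε _) (hrefract.comp p hslope),
    fderiv_comp _ hrefract hslope]
  simp only [ContinuousLinearMap.det, ContinuousLinearMap.toLinearMap_comp, LinearMap.det_comp,
    det_fderiv_driftAfterHit, det_fderiv_refractNormal (p := slopeChart p) hV hpos,
    det_fderiv_slopeChart hp]
  simp only [Function.comp_apply, refractNormal, slopeChart]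
  field_simp

end Refraction

theorem Function.update_sub_div_smul_update {ι K : Type*} [DecidableEq ι] [DivisionRing K]
    (x r : ι → K) (i : ι) {a b : K} (hb : b ≠ 0) :
    Function.update x i a - (a / b) • Function.update r i b =
      Function.update x i 0 - (a / b) • Function.update r i 0 := by
  ext j
  rcases eq_or_ne j i with rfl | hj
  · simp [div_mul_cancel₀ a hb]
  · simp [Function.update_of_ne hj]

theorem refraction_step_jacobian_det_one_general
    (d : ℕ) (hd : 0 < d) (ε : ℝ) (x r : Fin d → ℝ)
    (ΔU : (Fin d → ℝ) → ℝ) (hΔU : Differentiable ℝ ΔU)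
    (W : ℝ → ℝ → ℝ)
    (hW : ∀ a b : ℝ, W a b =
      ΔU (Function.update x ⟨0, hd⟩ a - (a / b) • Function.update r ⟨0, hd⟩ b))
    (γ : ℝ × ℝ → ℝ × ℝ)
    (hγ : ∀ a b : ℝ, γ (a, b) =
      ((ε + a / b) * Real.sqrt (b ^ 2 - 2 * W a b),
        Real.sqrt (b ^ 2 - 2 * W a b))) :
    ∀ a b : ℝ, a < 0 → 0 < b → b ^ 2 > 2 * W a b →
      ∀ L : ℝ × ℝ →L[ℝ] ℝ × ℝ, HasFDerivAt γ L (a, b) →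
        LinearMap.det (L : ℝ × ℝ →ₗ[ℝ] ℝ × ℝ) = 1 := by
  intro a b _ hb hpos L hL
  set V : ℝ → ℝ := fun s => ΔU (Function.update x ⟨0, hd⟩ 0 - s • Function.update r ⟨0, hd⟩ 0)
  have hWV : ∀ a' b' : ℝ, b' ≠ 0 → W a' b' = V (a' / b') := fun a' b' hb' => by
    rw [hW, Function.update_sub_div_smul_update x r _ hb']
  have hγV : γ =ᶠ[nhds (a, b)] reducedRefraction ε V := by
    filter_upwards [continuous_snd.continuousAt.eventually_ne hb.ne'] with ⟨a', b'⟩ hb'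
    rw [hγ, hWV a' b' hb']
    rfl
  have hV : DifferentiableAt ℝ V (a / b) := by fun_prop
  have hVpos : 2 * V (a / b) < b ^ 2 := hWV a b hb.ne' ▸ hpos
  have hdiff := differentiableAt_reducedRefraction (ε := ε) (p := (a, b)) hb.ne' hV hVpos
  rw [hL.unique (hdiff.hasFDerivAt.congr_of_eventuallyEq hγV)]
  exact det_fderiv_reducedRefraction hb.ne' hV hVpos

/-- Measure preservation of the refraction step in reduced coordinates: on the
region `x₁ < 0`, `r₁ > 0`, `r₁² > 2 W(x₁, r₁)`, the refraction map
`γ(x₁, r₁) = ((ε + x₁/r₁)·√(r₁² − 2W), √(r₁² − 2W))` has Jacobian determinant 1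
wherever it is differentiable. -/
theorem refraction_step_jacobian_det_one
    (d : ℕ) (hd : 0 < d) (ε : ℝ) (hε : 0 < ε) (x r : Fin d → ℝ)
    (ΔU : (Fin d → ℝ) → ℝ) (hΔU : Differentiable ℝ ΔU)
    (W : ℝ → ℝ → ℝ)
    (hW : ∀ a b : ℝ, W a b =
      ΔU (Function.update x ⟨0, hd⟩ a - (a / b) • Function.update r ⟨0, hd⟩ b))
    (γ : ℝ × ℝ → ℝ × ℝ)
    (hγ : ∀ a b : ℝ, γ (a, b) =
      ((ε + a / b) * Real.sqrt (b ^ 2 - 2 * W a b),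
        Real.sqrt (b ^ 2 - 2 * W a b))) :
    ∀ a b : ℝ, a < 0 → 0 < b → b ^ 2 > 2 * W a b →
      ∀ L : ℝ × ℝ →L[ℝ] ℝ × ℝ, HasFDerivAt γ L (a, b) →
        LinearMap.det (L : ℝ × ℝ →ₗ[ℝ] ℝ × ℝ) = 1 :=
  refraction_step_jacobian_det_one_general d hd ε x r ΔU hΔU W hW γ hγ
end
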